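/- Let A be the 3-dimensional complex 3-Lie algebra with [e1,e2,e3] = e1, and let T be the linear map whose matrix is O_1, i.e., T(e1) = 0, T(e2) = a21 e1 + a22 e2 + a23 e3, T(e3) = a31 e1 + a32 e2 + a33 e3, for arbitrary complex parameters a21,...,a33. Then T is an O-operator with respect to the adjoint representation. -/

import Mathlib

/-!
The bracket is `[x, y, z] = det(x, y, z) e₁`. Hence every bracket lies in `ℂ e₁ = ker T`, which
kills the right-hand side, while `[Tx, Ty, Tz] = det T · [x, y, z]` and `det T = 0` because
`T e₁ = 0`.
-/

open Finset

/-- The standard basis of `ℂ³`: `e 0 = e₁`, `e 1 = e₂`, `e 2 = e₃`. -/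
def e (i : Fin 3) : Fin 3 → ℂ := fun j => if j = i then 1 else 0

/-- The trilinear skew-symmetric bracket on `ℂ³` determined by `[e₁,e₂,e₃] = e₁`. -/
def br (x y z : Fin 3 → ℂ) : Fin 3 → ℂ := fun i =>
  if i = 0 then
    x 0 * (y 1 * z 2 - y 2 * z 1) - x 1 * (y 0 * z 2 - y 2 * z 0)
      + x 2 * (y 0 * z 1 - y 1 * z 0)
  else 0

/-- `T` is an `𝒪`-operator with respect to the adjoint representation. -/
def IsOOperator (T : (Fin 3 → ℂ) →ₗ[ℂ] (Fin 3 → ℂ)) : Prop :=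
  ∀ x y z : Fin 3 → ℂ, br (T x) (T y) (T z) =
    T (br (T x) (T y) z + br (T y) (T z) x + br (T z) (T x) y)

lemma Matrix.of_map_eq_mul_toMatrix'_transpose {R ι : Type*} [CommRing R] [Fintype ι]
    [DecidableEq ι] (T : (ι → R) →ₗ[R] ι → R) (v : ι → ι → R) :
    Matrix.of (fun i => T (v i)) = Matrix.of v * (LinearMap.toMatrix' T).transpose := by
  ext i j
  simp only [Matrix.of_apply, Matrix.mul_apply, Matrix.transpose_apply]
  rw [← LinearMap.toMatrix'_mulVec, Matrix.mulVec, dotProduct]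
  simp only [mul_comm]

lemma br_eq_det_smul (x y z : Fin 3 → ℂ) : br x y z = (Matrix.of ![x, y, z]).det • e 0 := by
  funext i
  fin_cases i
  · simp only [br, Fin.zero_eta, Fin.isValue, ↓reduceIte, Matrix.det_fin_three,
      Matrix.of_apply, Matrix.cons_val', Matrix.cons_val_fin_one, Matrix.cons_val_zero,
      Matrix.cons_val_one, Matrix.cons_val, Pi.smul_apply, e, smul_eq_mul, mul_one]
    ring
  all_goals simp [br, e]

lemma br_map (T : (Fin 3 → ℂ) →ₗ[ℂ] (Fin 3 → ℂ)) (x y z : Fin 3 → ℂ) :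
    br (T x) (T y) (T z) = LinearMap.det T • br x y z := by
  have rows : ![T x, T y, T z] = fun i => T (![x, y, z] i) := by
    funext i
    fin_cases i <;> rfl
  rw [br_eq_det_smul, br_eq_det_smul, rows, Matrix.of_map_eq_mul_toMatrix'_transpose,
    Matrix.det_mul, Matrix.det_transpose, LinearMap.det_toMatrix', smul_smul, mul_comm]

lemma map_br_of_map_e_zero {T : (Fin 3 → ℂ) →ₗ[ℂ] (Fin 3 → ℂ)} (h : T (e 0) = 0)
    (x y z : Fin 3 → ℂ) : T (br x y z) = 0 := by
  rw [br_eq_det_smul, map_smul, h, smul_zero]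

lemma det_eq_zero_of_map_e_zero {T : (Fin 3 → ℂ) →ₗ[ℂ] (Fin 3 → ℂ)} (h : T (e 0) = 0) :
    LinearMap.det T = 0 :=
  LinearMap.det_eq_zero_iff_ker_ne_bot.mpr <|
    (Submodule.ne_bot_iff _).mpr ⟨e 0, h, fun h0 => by simpa [e] using congrFun h0 0⟩

theorem O1_is_O_operator_general (T : (Fin 3 → ℂ) →ₗ[ℂ] (Fin 3 → ℂ))
    (h1 : T (e 0) = 0) :
    IsOOperator T := by
  intro x y z
  simp only [br_map, det_eq_zero_of_map_e_zero h1, zero_smul, map_add,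
    map_br_of_map_e_zero h1, add_zero]

/-- The linear map with matrix `O₁` is an `𝒪`-operator. -/
theorem O1_is_O_operator (T : (Fin 3 → ℂ) →ₗ[ℂ] (Fin 3 → ℂ))
    (a21 a22 a23 a31 a32 a33 : ℂ)
    (h1 : T (e 0) = 0)
    (h2 : T (e 1) = a21 • e 0 + a22 • e 1 + a23 • e 2)
    (h3 : T (e 2) = a31 • e 0 + a32 • e 1 + a33 • e 2) :
    IsOOperator T :=
  O1_is_O_operator_general T h1
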